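/- Let X ∈ ℝ^{N×N} be symmetric positive semidefinite of rank r with eigenvalues λ₁ ≥ ⋯ ≥ λ_r > 0, let 1 ≤ k ≤ r, assume λ_{k+1} ≤ λ_k/12, let W_k ∈ ℝ^{N×k} have orthonormal columns that are eigenvectors of X for λ₁,…,λ_k, let Λ_k = diag(λ₁,…,λ_k), and U* = W_k Λ_k^{1/2}. Suppose U ∈ ℝ^{N×k} has full column rank and ‖UUᵀ‖_F > (8/7)‖U*U*ᵀ‖_F. Then ‖(UUᵀ − X)U‖_F > (5/84) k^{1/4} λ_k^{3/2}. -/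

import Mathlib

open Matrix

/-- Frobenius norm of a real matrix. -/
noncomputable def frob {m n : Type*} [Fintype m] [Fintype n] (M : Matrix m n ℝ) : ℝ :=
  Real.sqrt (∑ i, ∑ j, (M i j) ^ 2)

/-- Trace (entrywise) inner product of two real matrices. -/
noncomputable def mip {m n : Type*} [Fintype m] [Fintype n] (A B : Matrix m n ℝ) : ℝ :=
  ∑ i, ∑ j, A i j * B i j

/-!
Pair the gradient with `U`: `⟪(UUᵀ - X)U, U⟫ = ‖UUᵀ‖² - ⟪X, UUᵀ⟫`. Splitting `X` into its top-`k`
part `U⋆U⋆ᵀ` and a tail with eigenvalues at most `λₖ/12`, the tail contributes at most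
`(λₖ/12)‖U‖² ≤ (λₖ/12)√k ‖UUᵀ‖ ≤ ‖U⋆U⋆ᵀ‖ ‖UUᵀ‖/12`, because `‖U‖² = tr UᵀU ≤ √k ‖UᵀU‖` and
`‖U⋆U⋆ᵀ‖ ≥ √k λₖ`. Hence `‖∇g‖ ‖U‖ ≥ ‖UUᵀ‖² - (13/12)‖U⋆U⋆ᵀ‖ ‖UUᵀ‖ > (5/84)‖U⋆U⋆ᵀ‖ ‖UUᵀ‖`,
while the same two estimates and `λₖ ≤ ‖UUᵀ‖` give `k^{1/4} λₖ^{3/2} ‖U‖ ≤ ‖U⋆U⋆ᵀ‖ ‖UUᵀ‖`.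
-/

section FrobeniusInner

variable {m n p : Type*} [Fintype m] [Fintype n] [Fintype p]

lemma mip_eq_trace (A B : Matrix m n ℝ) : mip A B = trace (Aᵀ * B) := by
  simp only [mip, trace, diag, mul_apply, transpose_apply]
  exact Finset.sum_comm

lemma mip_comm (A B : Matrix m n ℝ) : mip A B = mip B A := by
  simp only [mip, mul_comm]

lemma mip_self_nonneg (A : Matrix m n ℝ) : 0 ≤ mip A A :=
  Finset.sum_nonneg fun _ _ => Finset.sum_nonneg fun _ _ => mul_self_nonneg _

lemma frob_nonneg (A : Matrix m n ℝ) : 0 ≤ frob A := Real.sqrt_nonneg _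

lemma frob_eq_sqrt_mip (A : Matrix m n ℝ) : frob A = Real.sqrt (mip A A) := by
  simp only [frob, mip, sq]

lemma frob_sq (A : Matrix m n ℝ) : frob A ^ 2 = mip A A := by
  rw [frob_eq_sqrt_mip, Real.sq_sqrt (mip_self_nonneg A)]

lemma mip_mul_left (B : Matrix m p ℝ) (V : Matrix p n ℝ) (C : Matrix m n ℝ) :
    mip (B * V) C = mip V (Bᵀ * C) := by
  rw [mip_eq_trace, mip_eq_trace, transpose_mul, Matrix.mul_assoc]

lemma mip_mul_right (C : Matrix m n ℝ) (V : Matrix m p ℝ) (B : Matrix p n ℝ) :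
    mip C (V * B) = mip (C * Bᵀ) V := by
  rw [mip_eq_trace, mip_eq_trace, ← Matrix.mul_assoc, trace_mul_comm, transpose_mul,
    transpose_transpose, Matrix.mul_assoc]

lemma mip_sub_left (A B C : Matrix m n ℝ) : mip (A - B) C = mip A C - mip B C := by
  rw [mip_eq_trace, mip_eq_trace, mip_eq_trace, transpose_sub, Matrix.sub_mul, trace_sub]

lemma mip_le_frob_mul_frob (A B : Matrix m n ℝ) : mip A B ≤ frob A * frob B := by
  simp only [mip, frob, ← Fintype.sum_prod_type']
  exact Real.sum_mul_le_sqrt_mul_sqrt _ _ _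

lemma frob_transpose_mul_self (U : Matrix m n ℝ) : frob (Uᵀ * U) = frob (U * Uᵀ) := by
  rw [frob_eq_sqrt_mip, frob_eq_sqrt_mip, mip_eq_trace, mip_eq_trace, transpose_mul,
    transpose_mul, transpose_transpose, Matrix.mul_assoc, ← Matrix.mul_assoc U, trace_mul_comm,
    Matrix.mul_assoc, Matrix.mul_assoc]

lemma mip_sub_self (A B : Matrix m n ℝ) :
    mip (A - B) (A - B) = mip A A - 2 * mip B A + mip B B := by
  rw [mip_sub_left, mip_comm A, mip_comm B, mip_sub_left, mip_sub_left, mip_comm A B]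
  ring

lemma frob_transpose_mul_le [DecidableEq p] {W : Matrix m p ℝ} (hW : Wᵀ * W = 1)
    (U : Matrix m n ℝ) : frob (Wᵀ * U) ≤ frob U := by
  have hproj : mip (W * (Wᵀ * U)) U = mip (Wᵀ * U) (Wᵀ * U) := mip_mul_left _ _ _
  have hiso : mip (W * (Wᵀ * U)) (W * (Wᵀ * U)) = mip (Wᵀ * U) (Wᵀ * U) := by
    rw [mip_mul_left, ← Matrix.mul_assoc, hW, Matrix.one_mul]
  have := mip_self_nonneg (U - W * (Wᵀ * U))
  rw [mip_sub_self, hproj, hiso] at this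
  rw [frob_eq_sqrt_mip, frob_eq_sqrt_mip]
  exact Real.sqrt_le_sqrt (by linarith)

lemma frob_conj_of_transpose_mul_self [DecidableEq p] {W : Matrix m p ℝ} (hW : Wᵀ * W = 1)
    (M : Matrix p p ℝ) : frob (W * M * Wᵀ) = frob M := by
  rw [frob_eq_sqrt_mip, frob_eq_sqrt_mip, Matrix.mul_assoc, mip_mul_left, ← Matrix.mul_assoc Wᵀ,
    hW, Matrix.one_mul, mip_mul_right, transpose_transpose, Matrix.mul_assoc, hW, Matrix.mul_one]

lemma frob_diagonal_sq [DecidableEq n] (d : n → ℝ) : frob (diagonal d) ^ 2 = ∑ i, d i ^ 2 := by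
  rw [frob_sq]
  simp [mip, diagonal_apply, sq]

lemma mip_conj_diagonal [DecidableEq p] (W : Matrix m p ℝ) (d : p → ℝ) (U : Matrix m n ℝ) :
    mip (W * diagonal d * Wᵀ) (U * Uᵀ) = ∑ i, d i * ∑ j, (Wᵀ * U) i j ^ 2 := by
  rw [Matrix.mul_assoc, mip_mul_left, ← Matrix.mul_assoc Wᵀ, mip_mul_right, transpose_transpose,
    Matrix.mul_assoc]
  simp only [mip, diagonal_mul, Finset.mul_sum, sq, mul_assoc]

lemma sq_frob_le_sqrt_card_mul_frob (U : Matrix m n ℝ) :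
    frob U ^ 2 ≤ Real.sqrt (Fintype.card n) * frob (U * Uᵀ) := by
  have hdiag : ∑ c, (Uᵀ * U) c c ^ 2 ≤ ∑ c, ∑ j, (Uᵀ * U) c j ^ 2 :=
    Finset.sum_le_sum fun c _ =>
      Finset.single_le_sum (f := fun j => (Uᵀ * U) c j ^ 2) (fun _ _ => sq_nonneg _)
        (Finset.mem_univ c)
  calc frob U ^ 2 = ∑ c, 1 * (Uᵀ * U) c c := by simp [frob_sq, mip_eq_trace, trace]
    _ ≤ Real.sqrt (∑ _c : n, 1 ^ 2) * Real.sqrt (∑ c, (Uᵀ * U) c c ^ 2) :=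
      Real.sum_mul_le_sqrt_mul_sqrt _ _ _
    _ ≤ Real.sqrt (Fintype.card n) * frob (Uᵀ * U) := by
      simp only [one_pow, Finset.sum_const, Finset.card_univ, nsmul_eq_mul, mul_one, frob]
      gcongr
    _ = Real.sqrt (Fintype.card n) * frob (U * Uᵀ) := by rw [frob_transpose_mul_self]

end FrobeniusInner

lemma mip_gradient_self {m n : Type*} [Fintype m] [Fintype n] (X : Matrix m m ℝ)
    (U : Matrix m n ℝ) :
    mip ((U * Uᵀ - X) * U) U = frob (U * Uᵀ) ^ 2 - mip X (U * Uᵀ) := by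
  rw [← transpose_transpose U, ← mip_mul_right, transpose_transpose, mip_sub_left, frob_sq]

lemma transpose_mul_submatrix_self {m p q : Type*} [Fintype m] [DecidableEq p] [DecidableEq q]
    {W : Matrix m p ℝ} (hW : Wᵀ * W = 1) {f : q → p} (hf : Function.Injective f) :
    (W.submatrix id f)ᵀ * W.submatrix id f = 1 := by
  rw [transpose_submatrix, ← submatrix_mul _ _ _ _ _ Function.bijective_id, hW, submatrix_one _ hf]

lemma mul_diagonal_sqrt_mul_transpose {m p : Type*} [Fintype p] [DecidableEq p]
    (V : Matrix m p ℝ) {d : p → ℝ} (hd : ∀ i, 0 ≤ d i) :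
    V * diagonal (fun i => Real.sqrt (d i)) * (V * diagonal (fun i => Real.sqrt (d i)))ᵀ =
      V * diagonal d * Vᵀ := by
  rw [transpose_mul, diagonal_transpose, Matrix.mul_assoc, ← Matrix.mul_assoc (diagonal _),
    diagonal_mul_diagonal, ← Matrix.mul_assoc]
  simp only [Real.mul_self_sqrt (hd _)]

lemma sqrt_card_mul_le_frob_diagonal {n : Type*} [Fintype n] [DecidableEq n] {d : n → ℝ}
    {c : ℝ} (hc : 0 ≤ c) (hd : ∀ i, c ≤ d i) :
    Real.sqrt (Fintype.card n) * c ≤ frob (diagonal d) := by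
  rw [← pow_le_pow_iff_left₀ (by positivity) (frob_nonneg _) two_ne_zero, frob_diagonal_sq,
    mul_pow, Real.sq_sqrt (Nat.cast_nonneg _)]
  calc (Fintype.card n : ℝ) * c ^ 2 = ∑ _i : n, c ^ 2 := by simp
    _ ≤ ∑ i, d i ^ 2 := Finset.sum_le_sum fun i _ => pow_le_pow_left₀ hc (hd i) 2

lemma Fin.sum_castLE_eq_sum_filter {M : Type*} [AddCommMonoid M] {k r : ℕ} (h : k ≤ r)
    (f : Fin r → M) : ∑ q : Fin k, f (Fin.castLE h q) = ∑ p with p.val < k, f p := by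
  change ∑ q, f (Fin.castLEEmb h q) = _
  rw [← Finset.sum_map Finset.univ (Fin.castLEEmb h)]
  congr 1
  ext p
  simp only [Finset.mem_map, Finset.mem_univ, true_and, Finset.mem_filter, Fin.castLEEmb_apply]
  exact ⟨fun ⟨q, hq⟩ => hq ▸ q.isLt, fun hp => ⟨⟨p, hp⟩, rfl⟩⟩

lemma sum_mul_le_sum_castLE_add {k r : ℕ} (h : k ≤ r) {lam t : Fin r → ℝ} {c : ℝ} (hc : 0 ≤ c)
    (ht : ∀ p, 0 ≤ t p) (hlam : ∀ p : Fin r, k ≤ p.val → lam p ≤ c) :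
    ∑ p, lam p * t p ≤
      ∑ q : Fin k, lam (Fin.castLE h q) * t (Fin.castLE h q) + c * ∑ p, t p := by
  rw [← Finset.sum_filter_add_sum_filter_not Finset.univ (fun p : Fin r => p.val < k),
    Fin.sum_castLE_eq_sum_filter h fun p => lam p * t p]
  gcongr
  calc ∑ p with ¬p.val < k, lam p * t p ≤ ∑ p with ¬p.val < k, c * t p :=
        Finset.sum_le_sum fun p hp =>
          mul_le_mul_of_nonneg_right (hlam p (by simpa using hp)) (ht p)
    _ ≤ c * ∑ p, t p := by
      rw [← Finset.mul_sum]
      exact mul_le_mul_of_nonneg_left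
        (Finset.sum_le_sum_of_subset_of_nonneg (Finset.filter_subset _ _) fun p _ _ => ht p) hc

lemma large_gradient_of_norm_bounds {k lam a L u g : ℝ} (hk : 1 ≤ k) (hlam : 0 < lam)
    (hu : 0 ≤ u) (hL : Real.sqrt k * lam ≤ L) (hout : 8 / 7 * L < a)
    (hua : u ^ 2 ≤ Real.sqrt k * a) (hg : a ^ 2 - (L * a + lam / 12 * u ^ 2) ≤ g * u) :
    5 / 84 * k ^ ((1 : ℝ) / 4) * lam ^ ((3 : ℝ) / 2) < g := by
  set s := Real.sqrt k
  have hs : 1 ≤ s := Real.one_le_sqrt.mpr hk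
  have hs2 : s ^ 2 = k := Real.sq_sqrt (by linarith)
  have hL0 : 0 < L := by nlinarith
  have ha0 : 0 < a := by linarith
  have hlam_a : lam ≤ a := by nlinarith
  have hgu : 5 / 84 * (L * a) < g * u := by
    have htail : lam / 12 * u ^ 2 ≤ L * a / 12 := by
      nlinarith [mul_le_mul_of_nonneg_left hua (by positivity : 0 ≤ lam / 12)]
    nlinarith [mul_lt_mul_of_pos_right hout ha0]
  set c := k ^ ((1 : ℝ) / 4) * lam ^ ((3 : ℝ) / 2)
  have hc2 : c ^ 2 = s * lam ^ 3 := by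
    rw [mul_pow, ← Real.rpow_natCast, ← Real.rpow_natCast (lam ^ _), ← Real.rpow_mul (by linarith),
      ← Real.rpow_mul hlam.le, show s = k ^ ((1 : ℝ) / 2) from Real.sqrt_eq_rpow k]
    norm_num
  have hcu : c * u ≤ L * a := by
    rw [← pow_le_pow_iff_left₀ (by positivity) (by positivity) two_ne_zero]
    calc (c * u) ^ 2 = s * lam ^ 3 * u ^ 2 := by rw [mul_pow, hc2]
      _ ≤ s * lam ^ 3 * (s * a) := by gcongr
      _ = (s * lam) ^ 2 * (lam * a) := by ring
      _ ≤ L ^ 2 * (a * a) := by gcongr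
      _ = (L * a) ^ 2 := by ring
  exact lt_of_mul_lt_mul_right (by linarith) hu

theorem stmt_12 {N r k : ℕ} (hk1 : 1 ≤ k) (hkr : k ≤ r)
    (W : Matrix (Fin N) (Fin r) ℝ) (lam : Fin r → ℝ)
    (hW : Wᵀ * W = 1) (hpos : ∀ i, 0 < lam i)
    (hdesc : ∀ i j : Fin r, i ≤ j → lam j ≤ lam i)
    (X : Matrix (Fin N) (Fin N) ℝ) (hX : X = W * diagonal lam * Wᵀ)
    (hgap : (if h : k < r then lam ⟨k, h⟩ else 0) ≤ lam ⟨k - 1, by omega⟩ / 12)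
    (Ustar : Matrix (Fin N) (Fin k) ℝ)
    (hUstar : Ustar = W.submatrix id (Fin.castLE hkr) *
      diagonal (fun j : Fin k => Real.sqrt (lam (Fin.castLE hkr j))))
    (U : Matrix (Fin N) (Fin k) ℝ)
    (hout : (8 / 7) * frob (Ustar * Ustarᵀ) < frob (U * Uᵀ)) :
    (5 / 84) * (k : ℝ) ^ ((1 : ℝ) / 4) * lam ⟨k - 1, by omega⟩ ^ ((3 : ℝ) / 2) <
      frob ((U * Uᵀ - X) * U) := by
  set lamk := lam ⟨k - 1, by omega⟩
  have hlamk : 0 ≤ lamk / 12 := by linarith [hpos ⟨k - 1, by omega⟩]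
  set V := W.submatrix id (Fin.castLE hkr)
  have hUstar_gram : Ustar * Ustarᵀ = V * diagonal (fun q => lam (Fin.castLE hkr q)) * Vᵀ := by
    rw [hUstar, mul_diagonal_sqrt_mul_transpose V fun q => (hpos _).le]
  have hhead (q : Fin k) : lamk ≤ lam (Fin.castLE hkr q) :=
    hdesc _ _ (Fin.le_def.mpr (by simp only [Fin.val_castLE]; omega))
  have htail (p : Fin r) (hp : k ≤ p.val) : lam p ≤ lamk / 12 := by
    have hkr' : k < r := hp.trans_lt p.isLt
    exact (hdesc ⟨k, hkr'⟩ p hp).trans (by simpa [hkr'] using hgap)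
  have hL : Real.sqrt k * lamk ≤ frob (Ustar * Ustarᵀ) := by
    rw [hUstar_gram, frob_conj_of_transpose_mul_self (transpose_mul_submatrix_self hW
      (Fin.castLE_injective hkr))]
    simpa using sqrt_card_mul_le_frob_diagonal (hpos _).le hhead
  have hXU : mip X (U * Uᵀ) ≤
      frob (Ustar * Ustarᵀ) * frob (U * Uᵀ) + lamk / 12 * frob U ^ 2 := by
    calc mip X (U * Uᵀ) = ∑ p, lam p * ∑ c, (Wᵀ * U) p c ^ 2 := by
          rw [hX, mip_conj_diagonal]
      _ ≤ mip (Ustar * Ustarᵀ) (U * Uᵀ) + lamk / 12 * frob (Wᵀ * U) ^ 2 := by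
          rw [hUstar_gram, mip_conj_diagonal, frob_sq]
          convert sum_mul_le_sum_castLE_add hkr hlamk
            (fun p => Finset.sum_nonneg fun c _ => sq_nonneg ((Wᵀ * U) p c)) htail using 3
          · simp [V, mul_apply]
          · simp [mip, sq]
      _ ≤ _ := add_le_add (mip_le_frob_mul_frob _ _) (mul_le_mul_of_nonneg_left
          (pow_le_pow_left₀ (frob_nonneg _) (frob_transpose_mul_le hW U) 2) hlamk)
  have hgrad := mip_gradient_self X U ▸ mip_le_frob_mul_frob ((U * Uᵀ - X) * U) U
  exact large_gradient_of_norm_bounds (by exact_mod_cast hk1) (hpos _) (frob_nonneg U) hL hout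
    (by simpa using sq_frob_le_sqrt_card_mul_frob U) (by linarith)
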